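/- Let k be a field and consider the 5×5 matrix H over k with rows (a₂, 0, a₁, a₇, a₆), (0, a₄, a₅, a₁₁, a₁₀), (a₄, a₂, a₃, a₉, a₈), (1, 0, 0, 0, 0), (0, 1, 0, 0, 0). If rank(H) ≤ 2 then aᵢ = 0 for all i ∈ {1, 3, 5, 6, 7, 8, 9, 10, 11}. -/

import Mathlib

/-!
The last two rows of `H` are the unit vectors `e₀` and `e₁`, so for every row `i` and column
`j ∉ {0, 1}` the minor of `H` on rows `{i, 3, 4}` and columns `{0, 1, j}` equals `H i j`.
These are `3 × 3` minors, which vanish when `rank H ≤ 2`.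
-/

theorem Matrix.det_submatrix_eq_zero_of_rank_lt {K m n ι : Type*} [Field K] [Fintype n]
    [Fintype ι] [DecidableEq ι] (A : Matrix m n K) (f : ι → m) (g : ι → n)
    (h : A.rank < Fintype.card ι) : (A.submatrix f g).det = 0 := by
  by_contra hdet
  have hunit : IsUnit (A.submatrix f g) :=
    (Matrix.isUnit_iff_isUnit_det _).2 (isUnit_iff_ne_zero.2 hdet)
  have hle := A.rank_submatrix_le f g
  rw [Matrix.rank_of_isUnit _ hunit] at hle
  exact hle.not_gt h

/-- Over any field k, for the explicit 5×5 matrix H below, rank(H) ≤ 2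
implies aᵢ = 0 for i ∈ {1,3,5,6,7,8,9,10,11}. -/
theorem stmt_12 {k : Type*} [Field k]
    (a₁ a₂ a₃ a₄ a₅ a₆ a₇ a₈ a₉ a₁₀ a₁₁ : k)
    (H : Matrix (Fin 5) (Fin 5) k)
    (hH : H = !![a₂, 0, a₁, a₇, a₆;
                 0, a₄, a₅, a₁₁, a₁₀;
                 a₄, a₂, a₃, a₉, a₈;
                 1, 0, 0, 0, 0;
                 0, 1, 0, 0, 0])
    (hrank : H.rank ≤ 2) :
    a₁ = 0 ∧ a₃ = 0 ∧ a₅ = 0 ∧ a₆ = 0 ∧ a₇ = 0 ∧ a₈ = 0 ∧ a₉ = 0 ∧ a₁₀ = 0 ∧ a₁₁ = 0 := by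
  have minor (i j : Fin 5) : (H.submatrix ![i, 3, 4] ![0, 1, j]).det = 0 :=
    H.det_submatrix_eq_zero_of_rank_lt _ _ (hrank.trans_lt (by simp))
  subst hH
  have h02 := minor 0 2; have h03 := minor 0 3; have h04 := minor 0 4
  have h12 := minor 1 2; have h13 := minor 1 3; have h14 := minor 1 4
  have h22 := minor 2 2; have h23 := minor 2 3; have h24 := minor 2 4
  rw [Matrix.det_fin_three] at h02 h03 h04 h12 h13 h14 h22 h23 h24
  simp at h02 h03 h04 h12 h13 h14 h22 h23 h24
  exact ⟨h02, h22, h12, h04, h03, h24, h23, h14, h13⟩
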